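/- arXiv:1503.07624 — 2 statements merged into one kernel-verified Lean document; each statement's English description precedes it below -/
import Mathlib

section
/- In the parallel execution of ARC and OPT (with OPT serving each request before ARC), for every request σ_j in any phase P(i) with i > 0, the per-request inequality C_arc(σ_j) + ΔΦ ≤ 4N · C_opt(σ_j) holds, where C_arc(σ_j) and C_opt(σ_j) are 1 or 0 according to whether ARC (respectively OPT) faults on σ_j, and ΔΦ is the total change in the potential Φ = p − [(b₁'−t) + 2(t₁'−t) + 3(b₂'−t) + 4(t₂'−t)] during the processing of σ_j by both algorithms. -/
abbrev Page := ℕ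

/-- A valid offline demand-paging execution with cache size `N` on request
sequence `σ`, starting from the empty cache. `C i` is the cache just before
serving request `i` (so `C (i+1)` is the cache just after serving it).
Demand paging: on a hit the cache is unchanged; on a fault only the requested
page may be brought in. -/
def OptExec (N : ℕ) (σ : List Page) (C : ℕ → Finset Page) : Prop :=
  C 0 = ∅ ∧
  (∀ i, (C i).card ≤ N) ∧
  ∀ i, i < σ.length →
    σ.getD i 0 ∈ C (i + 1) ∧
    C (i + 1) ⊆ C i ∪ {σ.getD i 0} ∧
    (σ.getD i 0 ∈ C i → C (i + 1) = C i)

/-- Number of page faults incurred by an offline execution `C` on `σ`. -/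
def optFaults (σ : List Page) (C : ℕ → Finset Page) : ℕ :=
  ((List.range σ.length).filter (fun i => decide (σ.getD i 0 ∉ C i))).length

/-- The fault count of an optimal offline demand-paging algorithm (OPT)
with cache size `N` on `σ`. -/
noncomputable def optCost (N : ℕ) (σ : List Page) : ℕ :=
  sInf {k | ∃ C, OptExec N σ C ∧ optFaults σ C = k}

/-- The state of the ARC cache: main lists `T1`, `T2` and history lists
`B1`, `B2` (each kept in recency order, MRU at the head, LRU at the end),
together with the adaptive parameter `p`. -/
structure ArcState where
  T1 : List Page
  T2 : List Page
  B1 : List Page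
  B2 : List Page
  p  : ℕ

/-- ARC starts with empty lists and `p = 0`. -/
def ArcState.init : ArcState := ⟨[], [], [], [], 0⟩

/-- ARC's subroutine REPLACE: demote `LRU(T1)` to the MRU position of `B1`
if `|T1| ≥ 1` and either (the requested page was in `B2` and `|T1| = p`) or
`|T1| > p`; otherwise demote `LRU(T2)` to the MRU position of `B2`. -/
def arcReplace (xInB2 : Bool) (s : ArcState) : ArcState :=
  if 1 ≤ s.T1.length ∧ ((xInB2 = true ∧ s.T1.length = s.p) ∨ s.p < s.T1.length) then
    { s with T1 := s.T1.dropLast, B1 := s.T1.getLast?.toList ++ s.B1 }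
  else
    { s with T2 := s.T2.dropLast, B2 := s.T2.getLast?.toList ++ s.B2 }

/-- One step of ARC (cache size `N`, with the ±1 adaptation rule) on a
requested page `x`. -/
def arcStep (N : ℕ) (s : ArcState) (x : Page) : ArcState :=
  if x ∈ s.T1 ∨ x ∈ s.T2 then
    -- cache hit: move `x` to the MRU position of `T2`
    { s with T1 := s.T1.erase x, T2 := x :: s.T2.erase x }
  else if x ∈ s.B1 then
    -- history hit in B1: adapt `p := min (p+1) N`, REPLACE, move `x` to MRU(T2)
    let s2 := arcReplace false { s with p := min (s.p + 1) N }
    { s2 with B1 := s2.B1.erase x, T2 := x :: s2.T2 }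
  else if x ∈ s.B2 then
    -- history hit in B2: adapt `p := max (p-1) 0`, REPLACE, move `x` to MRU(T2)
    let s2 := arcReplace true { s with p := s.p - 1 }
    { s2 with B2 := s2.B2.erase x, T2 := x :: s2.T2 }
  else
    -- cache and directory miss
    let s2 :=
      if s.T1.length + s.B1.length = N then
        if s.T1.length < N then
          arcReplace false { s with B1 := s.B1.dropLast }
        else
          { s with T1 := s.T1.dropLast }
      else if s.T1.length + s.B1.length < N ∧
          N ≤ s.T1.length + s.T2.length + s.B1.length + s.B2.length then
        arcReplace false
          (if s.T1.length + s.T2.length + s.B1.length + s.B2.length = 2 * N then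
            { s with B2 := s.B2.dropLast }
          else s)
      else s
    { s2 with T1 := x :: s2.T1 }

/-- Run ARC on a request sequence. -/
def arcRun (N : ℕ) : ArcState → List Page → ArcState
  | s, [] => s
  | s, x :: xs => arcRun N (arcStep N s x) xs

/-- Number of page faults incurred by ARC on a request sequence. -/
def arcCost (N : ℕ) : ArcState → List Page → ℕ
  | _, [] => 0
  | s, x :: xs => (if x ∈ s.T1 ∨ x ∈ s.T2 then 0 else 1) + arcCost N (arcStep N s x) xs

/-- `t = t₁ + t₂`, the number of pages in ARC's cache. -/
def arcT (s : ArcState) : ℕ := s.T1.length + s.T2.length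

/-- `TOP(X)` for a recency-ordered list `X`: the longest prefix (i.e. the
largest set of most-recently-used pages) of `X` all of whose pages are in
OPT's cache `O`; `topLen` is its size. -/
def topLen (X : List Page) (O : Finset Page) : ℕ :=
  (X.takeWhile (fun q => decide (q ∈ O))).length

/-- `t₁' = |TOP(T1)|`. -/
def arcT1' (s : ArcState) (O : Finset Page) : ℕ := topLen s.T1 O

/-- `t₂' = |TOP(T2)|`. -/
def arcT2' (s : ArcState) (O : Finset Page) : ℕ := topLen s.T2 O

/-- `b₁' = |TOP(L1) ∩ B1|` where `L1 = T1 · B1`. -/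
def arcB1' (s : ArcState) (O : Finset Page) : ℕ :=
  (((s.T1 ++ s.B1).takeWhile (fun q => decide (q ∈ O))).filter
    (fun q => decide (q ∈ s.B1))).length

/-- `b₂' = |TOP(L2) ∩ B2|` where `L2 = T2 · B2`. -/
def arcB2' (s : ArcState) (O : Finset Page) : ℕ :=
  (((s.T2 ++ s.B2).takeWhile (fun q => decide (q ∈ O))).filter
    (fun q => decide (q ∈ s.B2))).length

/-- The potential `Φ = p − [(b₁'−t) + 2(t₁'−t) + 3(b₂'−t) + 4(t₂'−t)]`
with the value `t` supplied explicitly. -/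
def arcPhiAt (s : ArcState) (O : Finset Page) (t : ℤ) : ℤ :=
  (s.p : ℤ) - (((arcB1' s O : ℤ) - t) + 2 * ((arcT1' s O : ℤ) - t)
    + 3 * ((arcB2' s O : ℤ) - t) + 4 * ((arcT2' s O : ℤ) - t))

/-- The potential `Φ = p − [(b₁'−t) + 2(t₁'−t) + 3(b₂'−t) + 4(t₂'−t)]`. -/
def arcPhi (s : ArcState) (O : Finset Page) : ℤ :=
  arcPhiAt s O (arcT s)

/-- ARC's cache directory: all pages it tracks. -/
def arcDir (s : ArcState) : List Page := s.T1 ++ s.T2 ++ s.B1 ++ s.B2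

/-! After phase `P(0)` ARC's cache stays full, so `t = N` before and after the request and
`Φ = p + 10N − W` with `W = b₁' + 2t₁' + 3b₂' + 4t₂'`. The four `TOP` prefixes are disjoint
pieces of ARC's directory inside OPT's cache, hence `W ≤ 4N`; so on an OPT fault it suffices
that `C_arc + Δp ≤ W'`, which holds because the requested page ends up at the MRU end of `T1`
or `T2`. On an OPT hit one checks `C_arc + Δp ≤ ΔW` move by move: putting the requested page at
the MRU end of `T1`/`T2` gains `2`/`4`, a demotion by `REPLACE` loses at most `1`, taking the
page out of `B1`/`B2` loses at most `1`/`3`; in the cases where these bounds are too weak,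
counting pages against `|OPT| ≤ N` shows that one of the moves is free. -/

theorem dropLast_append_getLast?_toList {α : Type*} (X : List α) :
    X.dropLast ++ X.getLast?.toList = X := by
  obtain rfl | ⟨Y, y, rfl⟩ := X.eq_nil_or_concat
  · rfl
  · simp

theorem perm_cons_erase_append_erase {α : Type*} [BEq α] [LawfulBEq α] {x : α} {X Y : List α}
    (hx : x ∈ X ∨ x ∈ Y) (hXY : X.Disjoint Y) : (x :: (X.erase x ++ Y.erase x)).Perm (X ++ Y) := by
  rcases hx with hx | hx
  · rw [List.erase_of_not_mem fun hy => hXY hx hy]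
    exact (List.perm_cons_erase hx).symm.append_right Y
  · rw [List.erase_of_not_mem fun hy => hXY hy hx]
    exact List.perm_middle.symm.trans ((List.perm_cons_erase hx).symm.append_left X)

theorem perm_cons_append_erase {α : Type*} [BEq α] [LawfulBEq α] {x : α} {X Y : List α}
    (hx : x ∈ Y) :
    (x :: (X ++ Y.erase x)).Perm (X ++ Y) :=
  List.perm_middle.symm.trans ((List.perm_cons_erase hx).symm.append_left X)

theorem length_le_card_of_nodup {α : Type*} [DecidableEq α] {O : Finset α} {L : List α}
    (hn : L.Nodup) (h : ∀ a ∈ L, a ∈ O) : L.length ≤ O.card := by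
  rw [← List.toFinset_card_of_nodup hn]
  exact Finset.card_le_card fun a ha => h a (List.mem_toFinset.1 ha)

def topList (X : List Page) (O : Finset Page) : List Page :=
  X.takeWhile (fun q => decide (q ∈ O))

section TopList

variable {O : Finset Page} {x : Page} {X B : List Page}

theorem topLen_eq_length_topList : topLen X O = (topList X O).length := rfl

theorem topList_cons_of_mem (h : x ∈ O) : topList (x :: X) O = x :: topList X O := by
  simp [topList, h]

theorem topList_cons_of_not_mem (h : x ∉ O) : topList (x :: X) O = [] := by
  simp [topList, h]

theorem topLen_cons_of_mem (h : x ∈ O) : topLen (x :: X) O = topLen X O + 1 := by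
  rw [topLen_eq_length_topList, topList_cons_of_mem h, List.length_cons]; rfl

theorem topLen_cons_of_not_mem (h : x ∉ O) : topLen (x :: X) O = 0 := by
  rw [topLen_eq_length_topList, topList_cons_of_not_mem h, List.length_nil]

theorem topList_sublist : (topList X O).Sublist X :=
  (List.takeWhile_prefix _).sublist

theorem mem_of_mem_topList (h : x ∈ topList X O) : x ∈ O := by
  simpa using List.mem_takeWhile_imp h

theorem topLen_le_length : topLen X O ≤ X.length :=
  topList_sublist.length_le

theorem topLen_append :
    topLen (X ++ B) O =
      if topLen X O = X.length then X.length + topLen B O else topLen X O := by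
  unfold topLen
  rw [List.takeWhile_append]
  split_ifs <;> simp_all

theorem topLen_singleton : topLen [x] O = if x ∈ O then 1 else 0 := by
  by_cases h : x ∈ O <;> simp [topLen, h]

theorem topLen_dropLast_of_lt_length (h : topLen X O < X.length) :
    topLen X.dropLast O = topLen X O := by
  obtain rfl | ⟨Y, y, rfl⟩ := X.eq_nil_or_concat
  · rfl
  rw [List.concat_eq_append] at h ⊢
  rw [List.dropLast_concat]
  rw [topLen_append, topLen_singleton] at h ⊢
  simp only [List.length_append, List.length_singleton] at h
  split_ifs at h ⊢ <;> omega

theorem topLen_erase_of_mem_topList (h : x ∈ topList X O) :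
    topLen (X.erase x) O = topLen X O - 1 := by
  induction X with
  | nil => simp [topList] at h
  | cons a X ih =>
    have ha : a ∈ O := by
      by_contra ha; rw [topList_cons_of_not_mem ha] at h; simp at h
    rw [topList_cons_of_mem ha, List.mem_cons] at h
    rcases eq_or_ne x a with rfl | hxa
    · rw [List.erase_cons_head, topLen_cons_of_mem ha]; rfl
    · have hX : x ∈ topList X O := h.resolve_left hxa
      rw [List.erase_cons_tail (by simpa using hxa.symm), topLen_cons_of_mem ha,
        topLen_cons_of_mem ha, ih hX]
      have := List.length_pos_of_mem hX
      rw [← topLen_eq_length_topList] at this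
      omega

theorem topLen_erase_of_not_mem_topList (hx : x ∈ O) (h : x ∉ topList X O) :
    topLen (X.erase x) O = topLen X O := by
  induction X with
  | nil => rfl
  | cons a X ih =>
    have hxa : x ≠ a := by
      rintro rfl; exact h (by rw [topList_cons_of_mem hx]; exact List.mem_cons_self)
    rw [List.erase_cons_tail (by simpa using hxa.symm)]
    by_cases ha : a ∈ O
    · rw [topList_cons_of_mem ha, List.mem_cons, not_or] at h
      rw [topLen_cons_of_mem ha, topLen_cons_of_mem ha, ih h.2]
    · rw [topLen_cons_of_not_mem ha, topLen_cons_of_not_mem ha]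

theorem topLen_add_two_le_length (hX : x ∈ X) (hx : x ∈ O) (h : x ∉ topList X O) :
    topLen X O + 2 ≤ X.length := by
  induction X with
  | nil => simp at hX
  | cons a X ih =>
    have hxa : x ≠ a := by
      rintro rfl; exact h (by rw [topList_cons_of_mem hx]; exact List.mem_cons_self)
    have hX' : x ∈ X := (List.mem_cons.1 hX).resolve_left hxa
    by_cases ha : a ∈ O
    · rw [topList_cons_of_mem ha, List.mem_cons, not_or] at h
      rw [topLen_cons_of_mem ha, List.length_cons]
      have := ih hX' h.2
      omega
    · have := List.length_pos_of_mem hX'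
      rw [topLen_cons_of_not_mem ha, List.length_cons]
      omega

theorem topLen_le_topLen_erase_add_one (hx : x ∈ O) :
    topLen X O ≤ topLen (X.erase x) O + 1 := by
  by_cases h : x ∈ topList X O
  · rw [topLen_erase_of_mem_topList h]; omega
  · rw [topLen_erase_of_not_mem_topList hx h]; omega

end TopList

/-- With `X = Tᵢ` and `B = Bᵢ` this is `w₁ tᵢ' + w₂ bᵢ'`: `TOP(Tᵢ · Bᵢ)` reaches into `Bᵢ`
only when all of `Tᵢ` is in OPT's cache. -/
def prefixWeight (w₁ w₂ : ℕ) (X B : List Page) (O : Finset Page) : ℕ :=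
  w₁ * topLen X O + if topLen X O = X.length then w₂ * topLen B O else 0

section PrefixWeight

variable {w₁ w₂ : ℕ} {O : Finset Page} {x : Page} {X B : List Page}

theorem prefixWeight_cons_of_mem (hx : x ∈ O) :
    prefixWeight w₁ w₂ (x :: X) B O = prefixWeight w₁ w₂ X B O + w₁ := by
  simp only [prefixWeight, topLen_cons_of_mem hx, List.length_cons, Nat.add_right_cancel_iff]
  ring

theorem prefixWeight_le_mul {w : ℕ} (h₁ : w₁ ≤ w) (h₂ : w₂ ≤ w) :
    prefixWeight w₁ w₂ X B O ≤ w * (topLen X O + topLen B O) := by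
  unfold prefixWeight
  split_ifs <;> nlinarith

theorem prefixWeight_le_demote (hw : w₁ ≤ w₂ + 1) :
    prefixWeight w₁ w₂ X B O ≤
      prefixWeight w₁ w₂ X.dropLast (X.getLast?.toList ++ B) O + 1 := by
  obtain rfl | ⟨Y, y, rfl⟩ := X.eq_nil_or_concat
  · simp
  rw [List.concat_eq_append, List.dropLast_concat, List.getLast?_concat, Option.toList_some,
    List.singleton_append]
  unfold prefixWeight
  rw [topLen_append, topLen_singleton]
  by_cases hY : topLen Y O = Y.length
  · by_cases hy : y ∈ O
    · simp only [hY, hy, if_true, List.length_append, List.length_singleton,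
        topLen_cons_of_mem hy]
      nlinarith
    · simp only [hY, hy, if_true, if_false, add_zero, List.length_append,
        List.length_singleton]
      split_ifs <;> omega
  · have := topLen_le_length (X := Y) (O := O)
    simp only [hY, if_false, List.length_append, List.length_singleton]
    split_ifs <;> omega

theorem prefixWeight_le_dropLast_of_ne (h : topLen X O ≠ X.length) (B' : List Page) :
    prefixWeight w₁ w₂ X B O ≤ prefixWeight w₁ w₂ X.dropLast B' O := by
  have hlt : topLen X O < X.length := lt_of_le_of_ne topLen_le_length h
  unfold prefixWeight
  rw [topLen_dropLast_of_lt_length hlt, if_neg h]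
  omega

theorem prefixWeight_le_dropLast_right
    (h : topLen X O = X.length → topLen B O < B.length) :
    prefixWeight w₁ w₂ X B O ≤ prefixWeight w₁ w₂ X B.dropLast O := by
  unfold prefixWeight
  split_ifs with hX
  · rw [topLen_dropLast_of_lt_length (h hX)]
  · rfl

theorem prefixWeight_le_erase_right_add (hx : x ∈ O) :
    prefixWeight w₁ w₂ X B O ≤ prefixWeight w₁ w₂ X (B.erase x) O + w₂ := by
  have := topLen_le_topLen_erase_add_one (X := B) hx
  unfold prefixWeight
  split_ifs <;> nlinarith

theorem prefixWeight_le_erase_right (hx : x ∈ O)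
    (h : topLen X O = X.length → x ∉ topList B O) :
    prefixWeight w₁ w₂ X B O ≤ prefixWeight w₁ w₂ X (B.erase x) O := by
  unfold prefixWeight
  split_ifs with hX
  · rw [topLen_erase_of_not_mem_topList hx (h hX)]
  · rfl

theorem prefixWeight_le_erase_left_add (hx : x ∈ O) :
    prefixWeight w₁ w₂ X B O ≤ prefixWeight w₁ w₂ (X.erase x) B O + w₁ := by
  by_cases hX : x ∈ X
  · have hlen : (X.erase x).length + 1 = X.length := List.length_erase_add_one hX
    unfold prefixWeight
    by_cases h : x ∈ topList X O
    · obtain ⟨m, hm⟩ : ∃ m, topLen X O = m + 1 :=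
        Nat.exists_eq_add_one.2 (List.length_pos_of_mem h)
      rw [topLen_erase_of_mem_topList h, hm, Nat.add_sub_cancel]
      split_ifs <;> first | omega | nlinarith
    · have := topLen_add_two_le_length hX hx h
      rw [topLen_erase_of_not_mem_topList hx h, if_neg (by omega), if_neg (by omega)]
      omega
  · rw [List.erase_of_not_mem hX]; omega

end PrefixWeight

def arcWeight (s : ArcState) (O : Finset Page) : ℕ :=
  prefixWeight 2 1 s.T1 s.B1 O + prefixWeight 4 3 s.T2 s.B2 O

theorem length_filter_takeWhile_append {O : Finset Page} {X B : List Page}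
    (hXB : X.Disjoint B) :
    (((X ++ B).takeWhile (fun q => decide (q ∈ O))).filter (fun q => decide (q ∈ B))).length
      = if topLen X O = X.length then topLen B O else 0 := by
  have hX : X.filter (fun q => decide (q ∈ B)) = [] :=
    List.filter_eq_nil_iff.2 fun a ha => by simpa using hXB ha
  have hB : (topList B O).filter (fun q => decide (q ∈ B)) = topList B O :=
    List.filter_eq_self.2 fun a ha => by simpa using topList_sublist.subset ha
  rw [List.takeWhile_append]
  split_ifs with h₁ h₂ h₂
  · rw [List.filter_append, hX]; exact congrArg List.length hB
  · exact absurd h₁ h₂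
  · exact absurd h₂ h₁
  · rw [List.filter_eq_nil_iff.2 fun a ha => by
      simpa using hXB (topList_sublist.subset ha)]
    rfl

theorem disjoint_of_nodup_arcDir {s : ArcState} (hn : (arcDir s).Nodup) :
    s.T1.Disjoint s.T2 ∧ s.T1.Disjoint s.B1 ∧ s.T2.Disjoint s.B2 := by
  have h₁₂ : (s.T1 ++ s.T2).Sublist (arcDir s) :=
    (List.sublist_append_left _ _).trans (List.sublist_append_left _ _)
  have h₁ : (s.T1 ++ s.B1).Sublist (arcDir s) :=
    ((List.sublist_append_left _ s.T2).append_right s.B1).trans (List.sublist_append_left _ _)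
  have h₂ : (s.T2 ++ s.B2).Sublist (arcDir s) :=
    ((List.sublist_append_right s.T1 _).trans (List.sublist_append_left _ s.B1)).append_right _
  exact ⟨List.disjoint_of_nodup_append (h₁₂.nodup hn),
    List.disjoint_of_nodup_append (h₁.nodup hn), List.disjoint_of_nodup_append (h₂.nodup hn)⟩

theorem arcPhi_eq {s : ArcState} {O : Finset Page} (h₁ : s.T1.Disjoint s.B1)
    (h₂ : s.T2.Disjoint s.B2) :
    arcPhi s O = s.p + 10 * arcT s - arcWeight s O := by
  rw [arcPhi, arcPhiAt, arcB1', arcB2', length_filter_takeWhile_append h₁,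
    length_filter_takeWhile_append h₂, arcWeight, prefixWeight, prefixWeight, arcT1', arcT2']
  split_ifs <;> push_cast <;> ring

theorem topLen_add_le_card {s : ArcState} {O : Finset Page} (hn : (arcDir s).Nodup) :
    topLen s.T1 O + topLen s.T2 O + topLen s.B1 O + topLen s.B2 O ≤ O.card := by
  have hsub : (topList s.T1 O ++ topList s.T2 O ++ topList s.B1 O ++ topList s.B2 O).Sublist
      (arcDir s) :=
    ((topList_sublist.append topList_sublist).append topList_sublist).append topList_sublist
  have := length_le_card_of_nodup (hsub.nodup hn) fun a ha => by
    simp only [List.mem_append] at ha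
    rcases ha with ((h | h) | h) | h <;> exact mem_of_mem_topList h
  simp only [List.length_append] at this
  simpa only [topLen_eq_length_topList, add_assoc] using this

theorem arcWeight_le_four_mul_card {s : ArcState} {O : Finset Page}
    (hn : (arcDir s).Nodup) : arcWeight s O ≤ 4 * O.card := by
  have h₁ := prefixWeight_le_mul (w := 4) (X := s.T1) (B := s.B1) (O := O)
    (by norm_num : 2 ≤ 4) (by norm_num : 1 ≤ 4)
  have h₂ := prefixWeight_le_mul (w := 4) (X := s.T2) (B := s.B2) (O := O)
    (by norm_num : 4 ≤ 4) (by norm_num : 3 ≤ 4)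
  have := topLen_add_le_card (O := O) hn
  unfold arcWeight
  omega

namespace ArcState

def consT1 (x : Page) (s : ArcState) : ArcState := { s with T1 := x :: s.T1 }

def consT2 (x : Page) (s : ArcState) : ArcState := { s with T2 := x :: s.T2 }

variable {x : Page} {s : ArcState} {O : Finset Page}

theorem consT1_p : (s.consT1 x).p = s.p := rfl

theorem consT2_p : (s.consT2 x).p = s.p := rfl

theorem arcDir_consT1 : arcDir (s.consT1 x) = x :: arcDir s := rfl

theorem arcDir_consT2_perm : (arcDir (s.consT2 x)).Perm (x :: arcDir s) := by
  simp only [arcDir, consT2, List.append_assoc, List.cons_append]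
  exact List.perm_middle

theorem arcT_consT1 : arcT (s.consT1 x) = arcT s + 1 := by
  simp only [arcT, consT1, List.length_cons]; omega

theorem arcT_consT2 : arcT (s.consT2 x) = arcT s + 1 := by
  simp only [arcT, consT2, List.length_cons]; omega

theorem arcWeight_consT1 (hx : x ∈ O) : arcWeight (s.consT1 x) O = arcWeight s O + 2 := by
  simp only [arcWeight, consT1, prefixWeight_cons_of_mem hx]; omega

theorem arcWeight_consT2 (hx : x ∈ O) : arcWeight (s.consT2 x) O = arcWeight s O + 4 := by
  simp only [arcWeight, consT2, prefixWeight_cons_of_mem hx]; omega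

end ArcState

open ArcState

section Replace

variable {b : Bool} {s : ArcState} {O : Finset Page}

theorem arcReplace_p : (arcReplace b s).p = s.p := by
  unfold arcReplace; split_ifs <;> rfl

theorem length_T1_add_B1_arcReplace :
    (arcReplace b s).T1.length + (arcReplace b s).B1.length = s.T1.length + s.B1.length := by
  have := congrArg List.length (dropLast_append_getLast?_toList s.T1)
  unfold arcReplace
  split_ifs
  · simp only [List.length_append] at this ⊢; omega
  · rfl

theorem arcT_arcReplace (h : s.T2 ≠ [] ∨ (b = true ∧ s.p ≤ s.T1.length ∧ s.T1 ≠ [])) :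
    arcT (arcReplace b s) + 1 = arcT s := by
  unfold arcReplace arcT
  split_ifs with hc
  · have := List.length_pos_iff.1 (by omega : 0 < s.T1.length)
    simp only [List.length_dropLast]; omega
  · have hT2 : s.T2 ≠ [] := by
      rintro hT2
      obtain ⟨rfl, hp, hT1⟩ := h.resolve_left (not_not.2 hT2)
      have := List.length_pos_iff.2 hT1
      exact hc ⟨this, hp.lt_or_eq.elim Or.inr fun h => Or.inl ⟨rfl, h.symm⟩⟩
    have := List.length_pos_iff.2 hT2
    simp only [List.length_dropLast]; omega

theorem arcDir_arcReplace_perm : (arcDir (arcReplace b s)).Perm (arcDir s) := by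
  unfold arcReplace arcDir
  split_ifs
  · conv_rhs => rw [← dropLast_append_getLast?_toList s.T1]
    exact List.perm_iff_count.2 fun a => by simp only [List.count_append]; omega
  · conv_rhs => rw [← dropLast_append_getLast?_toList s.T2]
    exact List.perm_iff_count.2 fun a => by simp only [List.count_append]; omega

theorem arcWeight_le_arcReplace : arcWeight s O ≤ arcWeight (arcReplace b s) O + 1 := by
  unfold arcReplace arcWeight
  split_ifs
  · have := prefixWeight_le_demote (X := s.T1) (B := s.B1) (O := O) (by norm_num : 2 ≤ 1 + 1)
    dsimp only; omega
  · have := prefixWeight_le_demote (X := s.T2) (B := s.B2) (O := O) (by norm_num : 4 ≤ 3 + 1)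
    dsimp only; omega

theorem arcWeight_le_arcReplace_of_ne (hp : s.p < s.T1.length)
    (h : topLen s.T1 O ≠ s.T1.length) : arcWeight s O ≤ arcWeight (arcReplace b s) O := by
  rw [arcReplace, if_pos ⟨by omega, Or.inr hp⟩, arcWeight, arcWeight]
  have := prefixWeight_le_dropLast_of_ne (w₁ := 2) (w₂ := 1) (B := s.B1) h
    (s.T1.getLast?.toList ++ s.B1)
  dsimp only; omega

end Replace

def arcFault (s : ArcState) (x : Page) : ℕ := if x ∈ s.T1 ∨ x ∈ s.T2 then 0 else 1

def arcEvict (N : ℕ) (s : ArcState) : ArcState :=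
  if s.T1.length + s.B1.length = N then
    if s.T1.length < N then
      arcReplace false { s with B1 := s.B1.dropLast }
    else
      { s with T1 := s.T1.dropLast }
  else if s.T1.length + s.B1.length < N ∧
      N ≤ s.T1.length + s.T2.length + s.B1.length + s.B2.length then
    arcReplace false
      (if s.T1.length + s.T2.length + s.B1.length + s.B2.length = 2 * N then
        { s with B2 := s.B2.dropLast }
      else s)
  else s

section StepEquations

variable {N : ℕ} {s : ArcState} {x : Page}

theorem not_mem_arcDir (hc : ¬(x ∈ s.T1 ∨ x ∈ s.T2)) (hB1 : x ∉ s.B1) (hB2 : x ∉ s.B2) :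
    x ∉ arcDir s := by
  simp only [arcDir, List.mem_append]
  tauto

theorem cast_arcFault : ((arcFault s x : ℕ) : ℤ) = if x ∈ s.T1 ∨ x ∈ s.T2 then 0 else 1 := by
  unfold arcFault; split_ifs <;> rfl

theorem arcStep_of_mem_cache (h : x ∈ s.T1 ∨ x ∈ s.T2) :
    arcStep N s x = ({ s with T1 := s.T1.erase x, T2 := s.T2.erase x }).consT2 x :=
  if_pos h

/-- `REPLACE` and erasing `x` from `B1` commute, since `x` is not the page `REPLACE` moves. -/
theorem arcStep_of_mem_B1 (h : ¬(x ∈ s.T1 ∨ x ∈ s.T2)) (hB : x ∈ s.B1) :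
    arcStep N s x =
      (arcReplace false { s with p := min (s.p + 1) N, B1 := s.B1.erase x }).consT2 x := by
  have hx : x ∉ s.T1.getLast?.toList := fun hx =>
    h (Or.inl (List.mem_of_mem_getLast? (by simpa using hx)))
  rw [arcStep, if_neg h, if_pos hB]
  simp only [arcReplace, consT2, Bool.false_eq_true, false_and, false_or]
  split_ifs
  · simp only [List.erase_append_right _ hx]
  · rfl

theorem arcStep_of_mem_B2 (h : ¬(x ∈ s.T1 ∨ x ∈ s.T2)) (hB1 : x ∉ s.B1) (hB : x ∈ s.B2) :
    arcStep N s x =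
      (arcReplace true { s with p := s.p - 1, B2 := s.B2.erase x }).consT2 x := by
  have hx : x ∉ s.T2.getLast?.toList := fun hx =>
    h (Or.inr (List.mem_of_mem_getLast? (by simpa using hx)))
  rw [arcStep, if_neg h, if_neg hB1, if_pos hB]
  simp only [arcReplace, consT2, true_and]
  split_ifs
  · rfl
  · simp only [List.erase_append_right _ hx]

theorem arcStep_of_not_mem_arcDir (h : x ∉ arcDir s) :
    arcStep N s x = (arcEvict N s).consT1 x := by
  simp only [arcDir, List.mem_append, not_or] at h
  obtain ⟨⟨⟨h1, h2⟩, hB1⟩, hB2⟩ := h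
  rw [arcStep, if_neg (by tauto), if_neg hB1, if_neg hB2]
  rfl

end StepEquations

structure ArcInv (N : ℕ) (s : ArcState) : Prop where
  nodup : (arcDir s).Nodup
  length_T1_add_B1_le : s.T1.length + s.B1.length ≤ N
  arcT_le : arcT s ≤ N
  p_le : s.p ≤ N
  history_eq_nil : arcT s < N → s.B1 = [] ∧ s.B2 = []

theorem ArcInv.init (N : ℕ) : ArcInv N ArcState.init :=
  ⟨List.nodup_nil, Nat.zero_le N, Nat.zero_le N, Nat.zero_le N, fun _ => ⟨rfl, rfl⟩⟩

section Evict

variable {N : ℕ} {s : ArcState}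

theorem arcEvict_p : (arcEvict N s).p = s.p := by
  unfold arcEvict; split_ifs <;> simp only [arcReplace_p]

theorem arcDir_arcEvict_subperm : (arcDir (arcEvict N s)).Subperm (arcDir s) := by
  have hB1 : (arcDir { s with B1 := s.B1.dropLast }).Sublist (arcDir s) :=
    ((List.Sublist.refl _).append (List.dropLast_sublist _)).append (List.Sublist.refl _)
  have hB2 : (arcDir { s with B2 := s.B2.dropLast }).Sublist (arcDir s) :=
    (List.Sublist.refl _).append (List.dropLast_sublist _)
  have hT1 : (arcDir { s with T1 := s.T1.dropLast }).Sublist (arcDir s) :=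
    (((List.dropLast_sublist _).append (List.Sublist.refl _)).append
      (List.Sublist.refl _)).append (List.Sublist.refl _)
  unfold arcEvict
  split_ifs
  · exact arcDir_arcReplace_perm.subperm.trans hB1.subperm
  · exact hT1.subperm
  · exact arcDir_arcReplace_perm.subperm.trans hB2.subperm
  · exact arcDir_arcReplace_perm.subperm
  · exact List.Subperm.refl _

namespace ArcInv

variable (h : ArcInv N s)
include h

theorem arcEvict_eq_self (ht : arcT s < N) : arcEvict N s = s := by
  obtain ⟨hB1, hB2⟩ := h.history_eq_nil ht
  unfold arcT at ht
  simp only [arcEvict, hB1, hB2, List.length_nil]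
  rw [if_neg (by omega), if_neg (by omega)]

theorem length_T1_add_B1_arcEvict_lt (hN : 1 ≤ N) :
    (arcEvict N s).T1.length + (arcEvict N s).B1.length < N := by
  have hL := h.length_T1_add_B1_le
  have ht := h.arcT_le
  unfold arcT at ht
  unfold arcEvict
  split_ifs with h₁ h₂ h₃
  · rw [length_T1_add_B1_arcReplace]
    have : s.B1 ≠ [] := List.ne_nil_of_length_pos (by omega)
    have := List.length_pos_iff.2 this
    simp only [List.length_dropLast]; omega
  · have : s.T1 ≠ [] := List.ne_nil_of_length_pos (by omega)
    have := List.length_pos_iff.2 this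
    simp only [List.length_dropLast]; omega
  · rw [length_T1_add_B1_arcReplace]; exact h₃.1
  · rw [length_T1_add_B1_arcReplace]; exact h₃.1
  · omega

theorem arcT_arcEvict (hN : 1 ≤ N) (ht : arcT s = N) : arcT (arcEvict N s) + 1 = N := by
  have hL := h.length_T1_add_B1_le
  have ht' : s.T1.length + s.T2.length = N := ht
  have hT2 : s.T1.length < N → s.T2 ≠ [] := fun h₁ =>
    List.ne_nil_of_length_pos (by omega)
  unfold arcEvict
  split_ifs with h₁ h₂ h₃
  · exact (arcT_arcReplace (s := { s with B1 := s.B1.dropLast }) (.inl (hT2 h₂))).trans ht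
  · have : s.T1 ≠ [] := List.ne_nil_of_length_pos (by omega)
    have := List.length_pos_iff.2 this
    simp only [arcT, List.length_dropLast]; omega
  · exact (arcT_arcReplace (s := { s with B2 := s.B2.dropLast }) (.inl (hT2 (by omega)))).trans ht
  · exact (arcT_arcReplace (.inl (hT2 (by omega)))).trans ht
  · omega

end ArcInv

end Evict

namespace ArcInv

variable {N : ℕ} {s : ArcState} {x : Page}

theorem consT2_arcReplace {s₁ : ArcState} {b : Bool} (hn : (x :: arcDir s₁).Nodup)
    (hL : s₁.T1.length + s₁.B1.length ≤ N) (hp : s₁.p ≤ N) (ht : arcT s₁ = N)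
    (hT2 : s₁.T2 ≠ [] ∨ (b = true ∧ s₁.p ≤ s₁.T1.length ∧ s₁.T1 ≠ [])) :
    ArcInv N ((arcReplace b s₁).consT2 x) ∧ arcT ((arcReplace b s₁).consT2 x) = N := by
  have ht' : arcT ((arcReplace b s₁).consT2 x) = N := by
    rw [arcT_consT2, arcT_arcReplace hT2, ht]
  refine ⟨⟨?_, ?_, ht'.le, ?_, fun h => absurd ht' h.ne⟩, ht'⟩
  · exact (arcDir_consT2_perm.trans (arcDir_arcReplace_perm.cons x)).nodup_iff.2 hn
  · exact (length_T1_add_B1_arcReplace (b := b)).trans_le hL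
  · exact (arcReplace_p (b := b)).trans_le hp

variable (h : ArcInv N s)
include h

theorem arcT_eq_of_mem_history (hx : x ∈ s.B1 ∨ x ∈ s.B2) : arcT s = N := by
  by_contra hne
  obtain ⟨hB1, hB2⟩ := h.history_eq_nil (lt_of_le_of_ne h.arcT_le hne)
  simp [hB1, hB2] at hx

theorem arcStep_of_mem_cache (hx : x ∈ s.T1 ∨ x ∈ s.T2) :
    ArcInv N (arcStep N s x) ∧ arcT (arcStep N s x) = arcT s := by
  rw [_root_.arcStep_of_mem_cache hx]
  have hperm := perm_cons_erase_append_erase hx (disjoint_of_nodup_arcDir h.nodup).1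
  have ht : arcT (({ s with T1 := s.T1.erase x, T2 := s.T2.erase x } : ArcState).consT2 x)
      = arcT s := by
    have := hperm.length_eq
    simp only [List.length_cons, List.length_append] at this
    rw [arcT_consT2]; exact this
  have hdir : (x :: arcDir { s with T1 := s.T1.erase x, T2 := s.T2.erase x }).Perm (arcDir s) :=
    (hperm.append_right s.B1).append_right s.B2
  refine ⟨⟨?_, ?_, ht ▸ h.arcT_le, h.p_le, fun hlt => h.history_eq_nil (ht ▸ hlt)⟩, ht⟩
  · exact (arcDir_consT2_perm.trans hdir).nodup_iff.2 h.nodup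
  · exact le_trans (Nat.add_le_add_right List.length_erase_le _) h.length_T1_add_B1_le

theorem arcStep_of_mem_B1 (hx : ¬(x ∈ s.T1 ∨ x ∈ s.T2)) (hB : x ∈ s.B1) :
    ArcInv N (arcStep N s x) ∧ arcT (arcStep N s x) = N := by
  rw [_root_.arcStep_of_mem_B1 hx hB]
  have ht := h.arcT_eq_of_mem_history (.inl hB)
  have hL := h.length_T1_add_B1_le
  have hB1 := List.length_erase_add_one hB
  have ht' : s.T1.length + s.T2.length = N := ht
  refine consT2_arcReplace ?_ (by dsimp only; omega) (min_le_right _ _) ht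
    (.inl (List.ne_nil_of_length_pos (by dsimp only; omega)))
  exact ((perm_cons_append_erase hB).append_right s.B2).nodup_iff.2 h.nodup

theorem arcStep_of_mem_B2 (hN : 1 ≤ N) (hx : ¬(x ∈ s.T1 ∨ x ∈ s.T2)) (hB1 : x ∉ s.B1)
    (hB : x ∈ s.B2) : ArcInv N (arcStep N s x) ∧ arcT (arcStep N s x) = N := by
  rw [_root_.arcStep_of_mem_B2 hx hB1 hB]
  have ht := h.arcT_eq_of_mem_history (.inr hB)
  have ht' : s.T1.length + s.T2.length = N := ht
  have hp := h.p_le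
  refine consT2_arcReplace ?_ h.length_T1_add_B1_le (by dsimp only; omega) ht ?_
  · exact (perm_cons_append_erase hB).nodup_iff.2 h.nodup
  · by_cases hT2 : s.T2 = []
    · have : s.T2.length = 0 := by rw [hT2]; rfl
      have hT1 : 0 < s.T1.length := by omega
      exact .inr ⟨rfl, show s.p - 1 ≤ s.T1.length by omega, List.ne_nil_of_length_pos hT1⟩
    · exact .inl hT2

theorem arcStep_of_not_mem_arcDir (hN : 1 ≤ N) (hx : x ∉ arcDir s) :
    ArcInv N (arcStep N s x) ∧ arcT (arcStep N s x) = min N (arcT s + 1) := by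
  rw [_root_.arcStep_of_not_mem_arcDir hx]
  obtain ⟨l, hl, hsub⟩ := arcDir_arcEvict_subperm (N := N) (s := s)
  have hL := h.length_T1_add_B1_le
  have hle := h.arcT_le
  have ht : arcT ((arcEvict N s).consT1 x) = min N (arcT s + 1) := by
    rw [arcT_consT1]
    rcases hle.lt_or_eq with hlt | heq
    · rw [h.arcEvict_eq_self hlt]; omega
    · rw [h.arcT_arcEvict hN heq]; omega
  have hL' : (arcEvict N s).T1.length + (arcEvict N s).B1.length < N := by
    rcases hle.lt_or_eq with hlt | heq
    · have hB1 := (h.history_eq_nil hlt).1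
      rw [h.arcEvict_eq_self hlt, hB1]
      unfold arcT at hlt
      simp only [List.length_nil]; omega
    · exact h.length_T1_add_B1_arcEvict_lt hN
  refine ⟨⟨?_, ?_, by omega, ?_, fun hlt => ?_⟩, ht⟩
  · rw [arcDir_consT1, List.nodup_cons]
    exact ⟨fun hx' => hx (hsub.subset (hl.mem_iff.2 hx')), hl.nodup_iff.1 (hsub.nodup h.nodup)⟩
  · simp only [consT1, List.length_cons]; omega
  · exact (arcEvict_p (N := N)).trans_le h.p_le
  · have hlt' : arcT s < N := by omega
    rw [h.arcEvict_eq_self hlt']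
    exact h.history_eq_nil hlt'

theorem arcStep (hN : 1 ≤ N) :
    ArcInv N (arcStep N s x) ∧ arcT (arcStep N s x) = min N (arcT s + arcFault s x) := by
  unfold arcFault
  by_cases hc : x ∈ s.T1 ∨ x ∈ s.T2
  · rw [if_pos hc, Nat.add_zero, min_eq_right h.arcT_le]
    exact h.arcStep_of_mem_cache hc
  rw [if_neg hc]
  by_cases hB1 : x ∈ s.B1
  · rw [h.arcT_eq_of_mem_history (.inl hB1), min_eq_left (Nat.le_succ N)]
    exact h.arcStep_of_mem_B1 hc hB1
  by_cases hB2 : x ∈ s.B2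
  · rw [h.arcT_eq_of_mem_history (.inr hB2), min_eq_left (Nat.le_succ N)]
    exact h.arcStep_of_mem_B2 hN hc hB1 hB2
  exact h.arcStep_of_not_mem_arcDir hN (not_mem_arcDir hc hB1 hB2)

end ArcInv

theorem ArcInv.arcRun {N : ℕ} (hN : 1 ≤ N) (l : List Page) {s : ArcState} (h : ArcInv N s) :
    ArcInv N (arcRun N s l) ∧ arcT (arcRun N s l) = min N (arcT s + arcCost N s l) := by
  induction l generalizing s with
  | nil => exact ⟨h, (min_eq_right h.arcT_le).symm⟩
  | cons x l ih =>
    obtain ⟨h', ht'⟩ := h.arcStep (x := x) hN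
    obtain ⟨h'', ht''⟩ := ih h'
    refine ⟨h'', ht''.trans ?_⟩
    rw [ht', arcCost]
    change min N (min N (arcT s + arcFault s x) + _) = min N (arcT s + (arcFault s x + _))
    omega

section Weight

variable {N : ℕ} {s : ArcState} {O : Finset Page} {x : Page}

theorem arcWeight_le_eraseB1 (q : ℕ) (hx : x ∈ O) :
    arcWeight s O ≤ arcWeight { s with p := q, B1 := s.B1.erase x } O + 1 := by
  have := prefixWeight_le_erase_right_add (w₁ := 2) (w₂ := 1) (X := s.T1) (B := s.B1) hx
  unfold arcWeight; dsimp only; omega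

theorem arcWeight_le_eraseB2 (q : ℕ) (hx : x ∈ O) :
    arcWeight s O ≤ arcWeight { s with p := q, B2 := s.B2.erase x } O + 3 := by
  have := prefixWeight_le_erase_right_add (w₁ := 4) (w₂ := 3) (X := s.T2) (B := s.B2) hx
  unfold arcWeight; dsimp only; omega

theorem arcWeight_le_eraseB2_of_not_mem (q : ℕ) (hx : x ∈ O)
    (h : topLen s.T2 O = s.T2.length → x ∉ topList s.B2 O) :
    arcWeight s O ≤ arcWeight { s with p := q, B2 := s.B2.erase x } O := by
  have := prefixWeight_le_erase_right (w₁ := 4) (w₂ := 3) hx h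
  unfold arcWeight; dsimp only; omega

theorem arcFault_add_p_le (hx : x ∈ O) :
    arcFault s x + (arcStep N s x).p ≤ s.p + arcWeight (arcStep N s x) O := by
  unfold arcFault
  by_cases hc : x ∈ s.T1 ∨ x ∈ s.T2
  · rw [if_pos hc, arcStep_of_mem_cache hc, consT2_p]
    dsimp only; omega
  rw [if_neg hc]
  by_cases hB1 : x ∈ s.B1
  · rw [arcStep_of_mem_B1 hc hB1, arcWeight_consT2 hx]
    have : (arcReplace false { s with p := min (s.p + 1) N, B1 := s.B1.erase x }).p ≤ s.p + 1 :=
      arcReplace_p.trans_le (min_le_left _ _)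
    rw [consT2_p]; omega
  by_cases hB2 : x ∈ s.B2
  · rw [arcStep_of_mem_B2 hc hB1 hB2, arcWeight_consT2 hx]
    have : (arcReplace true { s with p := s.p - 1, B2 := s.B2.erase x }).p ≤ s.p :=
      arcReplace_p.trans_le (Nat.sub_le _ _)
    rw [consT2_p]; omega
  rw [arcStep_of_not_mem_arcDir (not_mem_arcDir hc hB1 hB2), arcWeight_consT1 hx]
  rw [consT1_p, arcEvict_p]; omega

theorem arcWeight_gain_of_mem_cache (hn : (arcDir s).Nodup) (hx : x ∈ O)
    (hc : x ∈ s.T1 ∨ x ∈ s.T2) : arcWeight s O ≤ arcWeight (arcStep N s x) O := by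
  rw [arcStep_of_mem_cache hc, arcWeight_consT2 hx]
  have h₁ := prefixWeight_le_erase_left_add (w₁ := 2) (w₂ := 1) (X := s.T1) (B := s.B1) hx
  have h₂ := prefixWeight_le_erase_left_add (w₁ := 4) (w₂ := 3) (X := s.T2) (B := s.B2) hx
  have hd := (disjoint_of_nodup_arcDir hn).1
  unfold arcWeight; dsimp only
  rcases hc with hc | hc
  · rw [List.erase_of_not_mem fun h => hd hc h]; omega
  · rw [List.erase_of_not_mem fun h => hd h hc]; omega

theorem arcWeight_gain_of_mem_B1 (hx : x ∈ O) (hc : ¬(x ∈ s.T1 ∨ x ∈ s.T2)) (hB : x ∈ s.B1) :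
    1 + (arcStep N s x).p + arcWeight s O ≤ s.p + arcWeight (arcStep N s x) O := by
  rw [arcStep_of_mem_B1 hc hB, arcWeight_consT2 hx]
  have h₁ := arcWeight_le_eraseB1 (s := s) (min (s.p + 1) N) hx
  have h₂ := arcWeight_le_arcReplace (b := false)
    (s := { s with p := min (s.p + 1) N, B1 := s.B1.erase x }) (O := O)
  have hp : (arcReplace false { s with p := min (s.p + 1) N, B1 := s.B1.erase x }).p ≤ s.p + 1 :=
    arcReplace_p.trans_le (min_le_left _ _)
  rw [consT2_p]; omega

/-- When `p = 0` and `x` lies in `TOP(L2)`, OPT's cache is too small to also hold all of `T1`,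
so `REPLACE` demotes a page of `T1` outside `TOP(T1)`, which costs nothing. -/
theorem arcWeight_gain_of_mem_B2 (hn : (arcDir s).Nodup) (ht : arcT s = N) (hO : O.card ≤ N)
    (hx : x ∈ O) (hc : ¬(x ∈ s.T1 ∨ x ∈ s.T2)) (hB1 : x ∉ s.B1) (hB : x ∈ s.B2) :
    1 + (arcStep N s x).p + arcWeight s O ≤ s.p + arcWeight (arcStep N s x) O := by
  rw [arcStep_of_mem_B2 hc hB1 hB, arcWeight_consT2 hx, consT2_p, arcReplace_p]
  have herase := arcWeight_le_eraseB2 (s := s) (s.p - 1) hx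
  have hrep := arcWeight_le_arcReplace (b := true) (O := O)
    (s := { s with p := s.p - 1, B2 := s.B2.erase x })
  dsimp only
  by_cases hp0 : 1 ≤ s.p
  · omega
  by_cases hcnt : topLen s.T2 O = s.T2.length ∧ x ∈ topList s.B2 O
  · obtain ⟨hT2, hxB2⟩ := hcnt
    have hcard := topLen_add_le_card (O := O) hn
    have hB2 : 0 < topLen s.B2 O := List.length_pos_of_mem hxB2
    have ht' : s.T1.length + s.T2.length = N := ht
    have hfree := arcWeight_le_arcReplace_of_ne (b := true) (O := O)
      (s := { s with p := s.p - 1, B2 := s.B2.erase x })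
      (show s.p - 1 < s.T1.length by omega) (show topLen s.T1 O ≠ s.T1.length by omega)
    omega
  · have hfree := arcWeight_le_eraseB2_of_not_mem (s := s) (s.p - 1) hx
      fun h h' => hcnt ⟨h, h'⟩
    omega

/-- OPT's cache holds `x` besides the `TOP` prefixes, so each list that `arcEvict` shortens
at its LRU end is not entirely in `TOP`, and only the `REPLACE` demotion can cost weight. -/
theorem arcWeight_le_arcEvict (h : ArcInv N s) (ht : arcT s = N) (hO : O.card ≤ N) (hx : x ∈ O)
    (hd : x ∉ arcDir s) : arcWeight s O ≤ arcWeight (arcEvict N s) O + 1 := by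
  have hcard := topLen_add_le_card (s := s.consT1 x) (O := O)
    (by rw [arcDir_consT1]; exact List.nodup_cons.2 ⟨hd, h.nodup⟩)
  simp only [consT1, topLen_cons_of_mem hx] at hcard
  have ht' : s.T1.length + s.T2.length = N := ht
  have hL := h.length_T1_add_B1_le
  have hT1 := topLen_le_length (X := s.T1) (O := O)
  unfold arcEvict
  split_ifs with h₁ h₂ h₃
  · have := prefixWeight_le_dropLast_right (w₁ := 2) (w₂ := 1) (X := s.T1) (B := s.B1) (O := O)
      (by omega)
    have := arcWeight_le_arcReplace (b := false) (s := { s with B1 := s.B1.dropLast }) (O := O)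
    unfold arcWeight at *; dsimp only at *; omega
  · have := prefixWeight_le_dropLast_of_ne (w₁ := 2) (w₂ := 1) (B := s.B1)
      (show topLen s.T1 O ≠ s.T1.length by omega) s.B1
    unfold arcWeight; dsimp only; omega
  · have := prefixWeight_le_dropLast_right (w₁ := 4) (w₂ := 3) (X := s.T2) (B := s.B2) (O := O)
      (by omega)
    have := arcWeight_le_arcReplace (b := false) (s := { s with B2 := s.B2.dropLast }) (O := O)
    unfold arcWeight at *; dsimp only at *; omega
  · exact arcWeight_le_arcReplace
  · omega

theorem arcWeight_gain_of_not_mem_arcDir (h : ArcInv N s) (ht : arcT s = N) (hO : O.card ≤ N)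
    (hx : x ∈ O) (hd : x ∉ arcDir s) :
    1 + (arcStep N s x).p + arcWeight s O ≤ s.p + arcWeight (arcStep N s x) O := by
  rw [arcStep_of_not_mem_arcDir hd, arcWeight_consT1 hx, consT1_p, arcEvict_p]
  have := arcWeight_le_arcEvict h ht hO hx hd
  omega

theorem arcWeight_gain (h : ArcInv N s) (ht : arcT s = N) (hO : O.card ≤ N) (hx : x ∈ O) :
    arcFault s x + (arcStep N s x).p + arcWeight s O ≤ s.p + arcWeight (arcStep N s x) O := by
  unfold arcFault
  by_cases hc : x ∈ s.T1 ∨ x ∈ s.T2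
  · have := arcWeight_gain_of_mem_cache (N := N) h.nodup hx hc
    have hp : (arcStep N s x).p = s.p := by rw [arcStep_of_mem_cache hc]; rfl
    rw [if_pos hc]; omega
  rw [if_neg hc]
  by_cases hB1 : x ∈ s.B1
  · exact arcWeight_gain_of_mem_B1 hx hc hB1
  by_cases hB2 : x ∈ s.B2
  · exact arcWeight_gain_of_mem_B2 h.nodup ht hO hx hc hB1 hB2
  exact arcWeight_gain_of_not_mem_arcDir h ht hO hx (not_mem_arcDir hc hB1 hB2)

end Weight

theorem arc_per_request_inequality_general (N : ℕ) (σ : List Page) (C : ℕ → Finset Page)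
    (hC : OptExec N σ C)
    (j : ℕ) (hj : j < σ.length)
    (hphase : N ≤ arcCost N ArcState.init (σ.take j))
    (s : ArcState) (hs : s = arcRun N ArcState.init (σ.take j)) :
    (if σ.getD j 0 ∈ s.T1 ∨ σ.getD j 0 ∈ s.T2 then (0 : ℤ) else 1)
        + (arcPhi (arcStep N s (σ.getD j 0)) (C (j + 1)) - arcPhi s (C j))
      ≤ 4 * N * (if σ.getD j 0 ∈ C j then (0 : ℤ) else 1) := by
  obtain ⟨-, hcard, hstep⟩ := hC
  obtain ⟨hmem, -, hkeep⟩ := hstep j hj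
  set x := σ.getD j 0
  have hN : 1 ≤ N := (Finset.card_pos.2 ⟨x, hmem⟩).trans_le (hcard (j + 1))
  obtain ⟨h, ht⟩ : ArcInv N s ∧ arcT s = N := by
    obtain ⟨h, ht⟩ := (ArcInv.init N).arcRun hN (σ.take j)
    rw [← hs] at h ht
    exact ⟨h, ht.trans (min_eq_left (le_add_left hphase))⟩
  obtain ⟨h', ht'⟩ := h.arcStep (x := x) hN
  rw [ht, min_eq_left (Nat.le_add_right _ _)] at ht'
  obtain ⟨-, hd₁, hd₂⟩ := disjoint_of_nodup_arcDir h.nodup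
  obtain ⟨-, hd₁', hd₂'⟩ := disjoint_of_nodup_arcDir h'.nodup
  rw [← cast_arcFault, arcPhi_eq hd₁ hd₂, arcPhi_eq hd₁' hd₂', ht, ht']
  by_cases hopt : x ∈ C j
  · rw [if_pos hopt, hkeep hopt]
    have := arcWeight_gain h ht (hcard j) hopt
    omega
  · rw [if_neg hopt]
    have := arcFault_add_p_le (N := N) (s := s) hmem
    have := arcWeight_le_four_mul_card (O := C j) h.nodup
    have := hcard j
    omega

/-- In the parallel execution of ARC and OPT (OPT serving each
request first), for every request `σ_j` lying after phase `P(0)` (i.e. with at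
least `N` ARC faults before it), the per-request inequality
`C_arc(σ_j) + ΔΦ ≤ 4N · C_opt(σ_j)` holds, where `ΔΦ` is the total change of
`Φ = p − [(b₁'−t) + 2(t₁'−t) + 3(b₂'−t) + 4(t₂'−t)]` during the processing of
`σ_j` by both algorithms. -/
theorem arc_per_request_inequality (N : ℕ) (σ : List Page) (C : ℕ → Finset Page)
    (hC : OptExec N σ C) (hCopt : optFaults σ C = optCost N σ)
    (j : ℕ) (hj : j < σ.length)
    (hphase : N ≤ arcCost N ArcState.init (σ.take j))
    (s : ArcState) (hs : s = arcRun N ArcState.init (σ.take j)) :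
    (if σ.getD j 0 ∈ s.T1 ∨ σ.getD j 0 ∈ s.T2 then (0 : ℤ) else 1)
        + (arcPhi (arcStep N s (σ.getD j 0)) (C (j + 1)) - arcPhi s (C j))
      ≤ 4 * N * (if σ.getD j 0 ∈ C j then (0 : ℤ) else 1) :=
  arc_per_request_inequality_general N σ C hC j hj hphase s hs
end

section
/- In the parallel execution of ARC and OPT, during the step in which OPT alone serves a request on which OPT faults, the change in the potential Φ = p − [(b₁'−t) + 2(t₁'−t) + 3(b₂'−t) + 4(t₂'−t)] satisfies ΔΦ ≤ 4N, because 0 ≤ b₁' + t₁' + b₂' + t₂' ≤ N implies that the quantity b₁' + 2t₁' + 3b₂' + 4t₂' can change by at most 4N, while p, t₁, t₂ are unchanged. -/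
/-!
ARC never tracks a page twice: each step moves a page between its lists, drops LRU pages, or
inserts the requested page when it is not tracked, so the directory `T₁·T₂·B₁·B₂` stays
duplicate-free. `TOP(L₁)` is a prefix of `T₁` or `T₁` followed by a prefix of `B₁`, hence
`t₁' + b₁' = |TOP(L₁)|`, and likewise for `L₂`; as `TOP(L₁)` and `TOP(L₂)` are disjoint subsets
of OPT's cache, `b₁' + t₁' + b₂' + t₂' ≤ N` for any cache of OPT. ARC's state is fixed during
the step, so `ΔΦ` is the decrease of `b₁' + 2t₁' + 3b₂' + 4t₂'`, which is at most `4N`.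
-/

theorem Multiset.erase_add_erase_le {α : Type*} [DecidableEq α] (s t : Multiset α) (a : α) :
    s.erase a + t.erase a ≤ (s + t).erase a := by
  rw [Multiset.le_iff_count]
  intro b
  by_cases hb : b = a
  · subst hb
    simp only [Multiset.count_add, Multiset.count_erase_self]
    omega
  · simp [Multiset.count_erase_of_ne hb]

theorem List.Nodup.length_le_card_of_forall_mem {α : Type*} {l : List α} {O : Finset α}
    (hl : l.Nodup) (hO : ∀ a ∈ l, a ∈ O) : l.length ≤ O.card :=
  Multiset.card_le_card ((Multiset.le_iff_subset (s := (l : Multiset α)) hl).2 hO)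

theorem List.length_takeWhile_add_length_filter_takeWhile_append {α : Type*} [DecidableEq α]
    (p : α → Bool) {X Y : List α} (h : X.Disjoint Y) :
    (X.takeWhile p).length + (((X ++ Y).takeWhile p).filter (fun q => decide (q ∈ Y))).length =
      ((X ++ Y).takeWhile p).length := by
  rw [List.takeWhile_append]
  split_ifs with hX
  · rw [(List.takeWhile_prefix p).eq_of_length hX, List.filter_append,
      List.filter_eq_nil_iff.2 fun a ha => by simpa using h ha,
      List.filter_eq_self.2 fun a ha => by simpa using (List.takeWhile_sublist p).subset ha]
    simp
  · rw [List.filter_eq_nil_iff.2 fun a ha =>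
      by simpa using h ((List.takeWhile_sublist p).subset ha)]
    simp

theorem List.coe_dropLast_le {α : Type*} (l : List α) : (l.dropLast : Multiset α) ≤ l :=
  Multiset.coe_le.mpr l.dropLast_sublist.subperm

theorem List.coe_dropLast_add_getLast? {α : Type*} (l : List α) :
    (l.dropLast : Multiset α) + l.getLast?.toList = l := by
  rw [Multiset.coe_add]
  congr 1
  rcases l.eq_nil_or_concat with rfl | ⟨l', a, rfl⟩ <;> simp

lemma coe_arcDir (s : ArcState) :
    (arcDir s : Multiset Page) = s.T1 + s.T2 + s.B1 + s.B2 := by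
  simp [arcDir]

lemma coe_arcDir_arcReplace (b : Bool) (s : ArcState) :
    (arcDir (arcReplace b s) : Multiset Page) = arcDir s := by
  unfold arcReplace
  split
  · simp only [coe_arcDir, ← Multiset.coe_add, ← List.coe_dropLast_add_getLast? s.T1]
    abel
  · simp only [coe_arcDir, ← Multiset.coe_add, ← List.coe_dropLast_add_getLast? s.T2]
    abel

lemma mem_B1_arcReplace {x : Page} {b : Bool} {s : ArcState} (h : x ∈ s.B1) :
    x ∈ (arcReplace b s).B1 := by
  unfold arcReplace
  split <;> simp [h]

lemma mem_B2_arcReplace {x : Page} {b : Bool} {s : ArcState} (h : x ∈ s.B2) :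
    x ∈ (arcReplace b s).B2 := by
  unfold arcReplace
  split <;> simp [h]

lemma coe_arcDir_move_T2 (s : ArcState) {x : Page} (hx : x ∈ s.T1 ∨ x ∈ s.T2) :
    (arcDir { s with T1 := s.T1.erase x, T2 := x :: s.T2.erase x } : Multiset Page) ≤
      x ::ₘ (arcDir s : Multiset Page).erase x := by
  have hx : x ∈ (s.T1 + s.T2 : Multiset Page) := by simpa using hx
  calc (arcDir { s with T1 := s.T1.erase x, T2 := x :: s.T2.erase x } : Multiset Page)
      = x ::ₘ ((s.T1 : Multiset Page).erase x + (s.T2 : Multiset Page).erase x + s.B1 + s.B2) := by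
        simp [coe_arcDir]
    _ ≤ x ::ₘ ((s.T1 + s.T2 : Multiset Page).erase x + s.B1 + s.B2) :=
        Multiset.cons_le_cons x (by gcongr; exact Multiset.erase_add_erase_le _ _ _)
    _ = x ::ₘ (arcDir s : Multiset Page).erase x := by
        rw [coe_arcDir, Multiset.erase_add_left_pos _ (Multiset.mem_add.2 (.inl hx)),
          Multiset.erase_add_left_pos _ hx]

lemma coe_arcDir_move_B1 (s : ArcState) {x : Page} (hx : x ∈ s.B1) :
    (arcDir { s with T2 := x :: s.T2, B1 := s.B1.erase x } : Multiset Page) = arcDir s := by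
  have hx : x ∈ (s.B1 : Multiset Page) := hx
  simp only [coe_arcDir, ← Multiset.coe_erase, ← Multiset.cons_coe]
  conv_rhs => rw [← Multiset.cons_erase hx]
  simp only [Multiset.add_cons, Multiset.cons_add]

lemma coe_arcDir_move_B2 (s : ArcState) {x : Page} (hx : x ∈ s.B2) :
    (arcDir { s with T2 := x :: s.T2, B2 := s.B2.erase x } : Multiset Page) = arcDir s := by
  have hx : x ∈ (s.B2 : Multiset Page) := hx
  simp only [coe_arcDir, ← Multiset.coe_erase, ← Multiset.cons_coe]
  conv_rhs => rw [← Multiset.cons_erase hx]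
  simp only [Multiset.add_cons, Multiset.cons_add]

lemma coe_arcDir_cons_T1_le {s s' : ArcState} {x : Page} (hx : x ∉ arcDir s)
    (h : (arcDir s' : Multiset Page) ≤ arcDir s) :
    (arcDir { s' with T1 := x :: s'.T1 } : Multiset Page) ≤
      x ::ₘ (arcDir s : Multiset Page).erase x := by
  have hcons : (arcDir { s' with T1 := x :: s'.T1 } : Multiset Page) = x ::ₘ arcDir s' := by
    simp [coe_arcDir]
  rw [Multiset.erase_of_notMem (by simpa using hx), hcons]
  exact Multiset.cons_le_cons x h

lemma coe_arcDir_arcStep_le (N : ℕ) (s : ArcState) (x : Page) :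
    (arcDir (arcStep N s x) : Multiset Page) ≤ x ::ₘ (arcDir s : Multiset Page).erase x := by
  have hB1 : (arcDir { s with B1 := s.B1.dropLast } : Multiset Page) ≤ arcDir s := by
    simp only [coe_arcDir]; gcongr; exact List.coe_dropLast_le _
  have hB2 : (arcDir { s with B2 := s.B2.dropLast } : Multiset Page) ≤ arcDir s := by
    simp only [coe_arcDir]; gcongr; exact List.coe_dropLast_le _
  have hT1 : (arcDir { s with T1 := s.T1.dropLast } : Multiset Page) ≤ arcDir s := by
    simp only [coe_arcDir]; gcongr; exact List.coe_dropLast_le _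
  unfold arcStep
  split_ifs with hcache hxB1 hxB2
  · exact coe_arcDir_move_T2 s hcache
  · dsimp only
    rw [coe_arcDir_move_B1 _ (mem_B1_arcReplace (s := { s with p := min (s.p + 1) N }) hxB1),
      coe_arcDir_arcReplace]
    exact Multiset.le_cons_erase _ _
  · dsimp only
    rw [coe_arcDir_move_B2 _ (mem_B2_arcReplace (s := { s with p := s.p - 1 }) hxB2),
      coe_arcDir_arcReplace]
    exact Multiset.le_cons_erase _ _
  all_goals have hx : x ∉ arcDir s := by simp_all [arcDir]
  · exact coe_arcDir_cons_T1_le hx ((coe_arcDir_arcReplace _ _).trans_le hB1)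
  · exact coe_arcDir_cons_T1_le hx hT1
  · exact coe_arcDir_cons_T1_le hx ((coe_arcDir_arcReplace _ _).trans_le hB2)
  · exact coe_arcDir_cons_T1_le hx (coe_arcDir_arcReplace _ _).le
  · exact coe_arcDir_cons_T1_le hx le_rfl

lemma nodup_arcDir_arcStep (N : ℕ) (x : Page) {s : ArcState} (h : (arcDir s).Nodup) :
    (arcDir (arcStep N s x)).Nodup := by
  have h : (arcDir s : Multiset Page).Nodup := h
  exact Multiset.nodup_of_le (coe_arcDir_arcStep_le N s x)
    (Multiset.nodup_cons.2 ⟨h.notMem_erase, h.erase x⟩)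

lemma nodup_arcDir_arcRun (N : ℕ) :
    ∀ (l : List Page) {s : ArcState}, (arcDir s).Nodup → (arcDir (arcRun N s l)).Nodup
  | [], _, h => h
  | x :: xs, _, h => nodup_arcDir_arcRun N xs (nodup_arcDir_arcStep N x h)

lemma arcT1'_add_arcB1' (s : ArcState) (O : Finset Page) (h : s.T1.Disjoint s.B1) :
    arcT1' s O + arcB1' s O = ((s.T1 ++ s.B1).takeWhile (fun q => decide (q ∈ O))).length :=
  List.length_takeWhile_add_length_filter_takeWhile_append _ h

lemma arcT2'_add_arcB2' (s : ArcState) (O : Finset Page) (h : s.T2.Disjoint s.B2) :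
    arcT2' s O + arcB2' s O = ((s.T2 ++ s.B2).takeWhile (fun q => decide (q ∈ O))).length :=
  List.length_takeWhile_add_length_filter_takeWhile_append _ h

lemma arcB1'_add_arcT1'_add_arcB2'_add_arcT2'_le_card (s : ArcState) (O : Finset Page)
    (hd : (arcDir s).Nodup) :
    arcB1' s O + arcT1' s O + arcB2' s O + arcT2' s O ≤ O.card := by
  have hperm : (s.T1 ++ s.B1 ++ (s.T2 ++ s.B2)).Perm (arcDir s) := by
    rw [← Multiset.coe_eq_coe, ← Multiset.coe_add, coe_arcDir]
    simp only [← Multiset.coe_add]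
    abel
  have hL : (s.T1 ++ s.B1 ++ (s.T2 ++ s.B2)).Nodup := hperm.nodup_iff.2 hd
  obtain ⟨hL1, hL2, -⟩ := List.nodup_append'.1 hL
  have h1 := arcT1'_add_arcB1' s O (List.nodup_append'.1 hL1).2.2
  have h2 := arcT2'_add_arcB2' s O (List.nodup_append'.1 hL2).2.2
  have hTOP : ((s.T1 ++ s.B1).takeWhile (fun q => decide (q ∈ O)) ++
      (s.T2 ++ s.B2).takeWhile (fun q => decide (q ∈ O))).length ≤ O.card := by
    refine List.Nodup.length_le_card_of_forall_mem
      (((List.takeWhile_sublist _).append (List.takeWhile_sublist _)).nodup hL) fun a ha => ?_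
    rcases List.mem_append.1 ha with ha | ha <;> simpa using List.mem_takeWhile_imp ha
  rw [List.length_append] at hTOP
  omega

theorem arc_opt_step_potential_general (N : ℕ) (σ : List Page) (C : ℕ → Finset Page)
    (hC : OptExec N σ C)
    (j : ℕ)
    (s : ArcState) (hs : s = arcRun N ArcState.init (σ.take j)) :
    arcB1' s (C j) + arcT1' s (C j) + arcB2' s (C j) + arcT2' s (C j) ≤ N ∧
    arcB1' s (C (j + 1)) + arcT1' s (C (j + 1))
        + arcB2' s (C (j + 1)) + arcT2' s (C (j + 1)) ≤ N ∧
    arcPhi s (C (j + 1)) - arcPhi s (C j) ≤ 4 * N := by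
  have hdir : (arcDir s).Nodup := hs ▸ nodup_arcDir_arcRun N _ (by simp [arcDir, ArcState.init])
  have hcard := hC.2.1
  have hbefore := (arcB1'_add_arcT1'_add_arcB2'_add_arcT2'_le_card s (C j) hdir).trans (hcard j)
  have hafter :=
    (arcB1'_add_arcT1'_add_arcB2'_add_arcT2'_le_card s (C (j + 1)) hdir).trans (hcard (j + 1))
  refine ⟨hbefore, hafter, ?_⟩
  unfold arcPhi arcPhiAt
  omega

/-- In the parallel execution of ARC and OPT, during the
step in which OPT alone serves a request on which it faults (ARC's state `s`
being unchanged), `0 ≤ b₁' + t₁' + b₂' + t₂' ≤ N` holds before and after, and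
the change of the potential `Φ = p − [(b₁'−t) + 2(t₁'−t) + 3(b₂'−t) + 4(t₂'−t)]`
satisfies `ΔΦ ≤ 4N` (since `b₁' + 2t₁' + 3b₂' + 4t₂'` can change by at most
`4N`, while `p`, `t₁`, `t₂` are unchanged). -/
theorem arc_opt_step_potential (N : ℕ) (σ : List Page) (C : ℕ → Finset Page)
    (hC : OptExec N σ C) (hCopt : optFaults σ C = optCost N σ)
    (j : ℕ) (hj : j < σ.length)
    (s : ArcState) (hs : s = arcRun N ArcState.init (σ.take j))
    (hfault : σ.getD j 0 ∉ C j) :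
    arcB1' s (C j) + arcT1' s (C j) + arcB2' s (C j) + arcT2' s (C j) ≤ N ∧
    arcB1' s (C (j + 1)) + arcT1' s (C (j + 1))
        + arcB2' s (C (j + 1)) + arcT2' s (C (j + 1)) ≤ N ∧
    arcPhi s (C (j + 1)) - arcPhi s (C j) ≤ 4 * N :=
  arc_opt_step_potential_general N σ C hC j s hs
end
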